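/- arXiv:2108.04076 — 4 statements merged into one kernel-verified Lean document; each statement's English description precedes it below -/
import Mathlib

section
/- Let (g,ρ) be an n-LieRep pair and f ∈ g* vanish on all brackets [x1,...,xn]_g. Define ϱ: Λ^n g → gl(V) by ϱ(x1,...,xn) = Σ_{i=1}^n (−1)^{i−1} f(xi) ρ(x1,...,x̂i,...,xn). Then ϱ is a representation of the (n+1)-Lie algebra g_f (with bracket {x1,...,x_{n+1}} = Σ_i (−1)^{i−1}f(xi)[x1,...,x̂i,...,x_{n+1}]_g) on V. -/
/-- A map on `k`-tuples is multilinear (additive and homogeneous in each slot). -/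
def MultiLinearOn (K : Type*) [Field K] {g h : Type*} [AddCommGroup g] [Module K g]
    [AddCommGroup h] [Module K h] {k : ℕ} (f : (Fin k → g) → h) : Prop :=
  (∀ (x : Fin k → g) (i : Fin k) (a b : g),
      f (Function.update x i (a + b)) = f (Function.update x i a) + f (Function.update x i b)) ∧
  (∀ (x : Fin k → g) (i : Fin k) (c : K) (a : g),
      f (Function.update x i (c • a)) = c • f (Function.update x i a))

/-- A map on `k`-tuples is skew-symmetric. -/
def SkewOn {g h : Type*} [AddCommGroup h] {k : ℕ} (f : (Fin k → g) → h) : Prop :=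
  ∀ (x : Fin k → g) (σ : Equiv.Perm (Fin k)), f (x ∘ σ) = (Equiv.Perm.sign σ : ℤ) • f x

/-- The Filippov (fundamental) identity for an `(m+2)`-ary bracket. -/
def Filippov {g : Type*} [AddCommGroup g] {m : ℕ} (br : (Fin (m + 2) → g) → g) : Prop :=
  ∀ (x : Fin (m + 1) → g) (y : Fin (m + 2) → g),
    br (Fin.snoc x (br y)) =
      ∑ i : Fin (m + 2), br (Function.update y i (br (Fin.snoc x (y i))))

/-- `br` is an `n`-Lie algebra bracket (`n = m+2`): multilinear, skew-symmetric, Filippov. -/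
def IsNLie (K : Type*) [Field K] {g : Type*} [AddCommGroup g] [Module K g] {m : ℕ}
    (br : (Fin (m + 2) → g) → g) : Prop :=
  MultiLinearOn K br ∧ SkewOn br ∧ Filippov br

/-- `ρ` is a representation of the `(m+2)`-Lie algebra `(g, br)` on `V`. -/
def IsRep (K : Type*) [Field K] {g V : Type*} [AddCommGroup g] [Module K g]
    [AddCommGroup V] [Module K V] {m : ℕ} (br : (Fin (m + 2) → g) → g)
    (ρ : (Fin (m + 1) → g) → Module.End K V) : Prop :=
  MultiLinearOn K ρ ∧ SkewOn ρ ∧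
  (∀ X Y : Fin (m + 1) → g,
      ρ X * ρ Y - ρ Y * ρ X =
        ∑ i : Fin (m + 1), ρ (Function.update Y i (br (Fin.snoc X (Y i))))) ∧
  (∀ (x : Fin m → g) (y : Fin (m + 2) → g),
      ρ (Fin.snoc x (br y)) =
        ∑ i : Fin (m + 2), ((-1 : ℤ) ^ ((m + 1) - (i : ℕ))) •
          (ρ (fun j => y (i.succAbove j)) * ρ (Fin.snoc x (y i))))

/-- `T : V → g` is a relative Rota-Baxter operator on the `(m+2)`-LieRep pair `(g, br; ρ)`. -/
def IsRBO (K : Type*) [Field K] {g V : Type*} [AddCommGroup g] [Module K g]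
    [AddCommGroup V] [Module K V] {m : ℕ} (br : (Fin (m + 2) → g) → g)
    (ρ : (Fin (m + 1) → g) → Module.End K V) (T : V →ₗ[K] g) : Prop :=
  ∀ v : Fin (m + 2) → V,
    br (fun i => T (v i)) =
      ∑ i : Fin (m + 2), ((-1 : ℤ) ^ ((m + 1) - (i : ℕ))) •
        T (ρ (fun j => T (v (i.succAbove j))) (v i))

/-- The induced bracket `[u₁,...,uₙ]_T` on `V` of a relative Rota-Baxter operator. -/
def rbBracket (K : Type*) [Field K] {g V : Type*} [AddCommGroup g] [Module K g]
    [AddCommGroup V] [Module K V] {m : ℕ}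
    (ρ : (Fin (m + 1) → g) → Module.End K V) (T : V →ₗ[K] g)
    (v : Fin (m + 2) → V) : V :=
  ∑ i : Fin (m + 2), ((-1 : ℤ) ^ ((m + 1) - (i : ℕ))) •
    ρ (fun j => T (v (i.succAbove j))) (v i)

/-- The induced representation map `ρ_T` of `(V, [-,...,-]_T)` on `g`. -/
def rbRho (K : Type*) [Field K] {g V : Type*} [AddCommGroup g] [Module K g]
    [AddCommGroup V] [Module K V] {m : ℕ} (br : (Fin (m + 2) → g) → g)
    (ρ : (Fin (m + 1) → g) → Module.End K V) (T : V →ₗ[K] g)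
    (u : Fin (m + 1) → V) (x : g) : g :=
  br (Fin.snoc (fun j => T (u j)) x) -
    ∑ i : Fin (m + 1), ((-1 : ℤ) ^ ((m + 1) - (i : ℕ))) •
      T (ρ (Fin.snoc (fun j : Fin m => T (u (i.succAbove j))) x) (u i))

/-- The bracket `[x₁,...,xₙ]_C` induced by an `n`-pre-Lie product (`n = m+2`). -/
def preC (K : Type*) [Field K] {g : Type*} [AddCommGroup g] [Module K g] {m : ℕ}
    (p : (Fin (m + 1) → g) → g → g) (y : Fin (m + 2) → g) : g :=
  ∑ i : Fin (m + 2), ((-1 : ℤ) ^ ((m + 1) - (i : ℕ))) •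
    p (fun j => y (i.succAbove j)) (y i)

/-- `p` is an `n`-pre-Lie algebra structure (`n = m+2`). -/
def IsNPreLie (K : Type*) [Field K] {g : Type*} [AddCommGroup g] [Module K g] {m : ℕ}
    (p : (Fin (m + 1) → g) → g → g) : Prop :=
  (∀ z : g, MultiLinearOn K (fun x => p x z)) ∧
  (∀ (x : Fin (m + 1) → g) (a b : g), p x (a + b) = p x a + p x b) ∧
  (∀ (x : Fin (m + 1) → g) (c : K) (a : g), p x (c • a) = c • p x a) ∧
  (∀ z : g, SkewOn (fun x => p x z)) ∧
  (∀ (x y : Fin (m + 1) → g) (z : g),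
      p x (p y z) =
        (∑ i : Fin (m + 1), p (Function.update y i (preC K p (Fin.snoc x (y i)))) z) +
          p y (p x z)) ∧
  (∀ (x : Fin m → g) (w : g) (y : Fin (m + 2) → g),
      p (Fin.cons (preC K p y) x) w =
        ∑ i : Fin (m + 2), ((-1 : ℤ) ^ ((m + 1) - (i : ℕ))) •
          p (fun j => y (i.succAbove j)) (p (Fin.cons (y i) x) w))

/-- The `(n+1)`-Lie bracket on `g` built from an `n`-Lie bracket (`n = m+2`) and a linear
functional `f` vanishing on brackets:
`{x₁,...,x_{n+1}} = Σᵢ (-1)^{i-1} f(xᵢ) [x₁,...,x̂ᵢ,...,x_{n+1}]_g`. -/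
def fBr (K : Type*) [Field K] {g : Type*} [AddCommGroup g] [Module K g] {m : ℕ}
    (br : (Fin (m + 2) → g) → g) (f : g →ₗ[K] K) (x : Fin (m + 1 + 2) → g) : g :=
  ∑ i : Fin (m + 1 + 2), ((-1 : ℤ) ^ (i : ℕ)) •
    (f (x i) • br (fun j => x (i.succAbove j)))

/-- The induced map `ϱ(x₁,...,xₙ) = Σᵢ (-1)^{i-1} f(xᵢ) ρ(x₁,...,x̂ᵢ,...,xₙ)`. -/
def fRho (K : Type*) [Field K] {g V : Type*} [AddCommGroup g] [Module K g]
    [AddCommGroup V] [Module K V] {m : ℕ}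
    (ρ : (Fin (m + 1) → g) → Module.End K V) (f : g →ₗ[K] K)
    (x : Fin (m + 1 + 1) → g) : Module.End K V :=
  ∑ i : Fin (m + 1 + 1), ((-1 : ℤ) ^ (i : ℕ)) •
    (f (x i) • ρ (fun j => x (i.succAbove j)))


section Helpers
open Finset Function


variable {α : Type*}

lemma update_comp_succAbove_self {n : ℕ} (x : Fin (n+1) → α) (i : Fin (n+1)) (v : α) :
    (update x i v) ∘ i.succAbove = x ∘ i.succAbove := by
  funext k
  simp [Function.comp, Function.update_of_ne (Fin.succAbove_ne i k)]

lemma update_comp_succAbove {n : ℕ} (x : Fin (n+1) → α) (i k : Fin (n+1)) (l : Fin n)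
    (h : i.succAbove l = k) (v : α) :
    (update x k v) ∘ i.succAbove = update (x ∘ i.succAbove) l v := by
  funext j
  rcases eq_or_ne j l with rfl | hj
  · simp only [Function.comp_apply]
    rw [h]; simp
  · have hne : i.succAbove j ≠ k := by
      rw [← h]; exact fun hc => hj (Fin.succAbove_right_injective hc)
    simp [Function.comp, Function.update_of_ne hne, Function.update_of_ne hj]

lemma range_double {n : ℕ} (i k : Fin (n+2)) (l : Fin (n+1)) (h : i.succAbove l = k) :
    Set.range (i.succAbove ∘ l.succAbove) = ({i, k}ᶜ : Set (Fin (n+2))) := by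
  ext z
  simp only [Set.mem_range, Function.comp, Set.mem_compl_iff, Set.mem_insert_iff,
    Set.mem_singleton_iff, not_or]
  constructor
  · rintro ⟨w, rfl⟩
    refine ⟨Fin.succAbove_ne i _, fun hc => ?_⟩
    rw [← h] at hc
    exact Fin.succAbove_ne l w (Fin.succAbove_right_injective hc)
  · rintro ⟨hz1, hz2⟩
    obtain ⟨u, hu⟩ := Fin.exists_succAbove_eq hz1
    have hul : u ≠ l := fun hc => hz2 (by rw [← hu, hc, h])
    obtain ⟨w, hw⟩ := Fin.exists_succAbove_eq hul
    exact ⟨w, by rw [hw, hu]⟩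

lemma succAbove_succAbove_comm {n : ℕ} (i k : Fin (n+2)) (l l' : Fin (n+1))
    (h : i.succAbove l = k) (h' : k.succAbove l' = i) :
    i.succAbove ∘ l.succAbove = k.succAbove ∘ l'.succAbove := by
  have m1 : StrictMono (i.succAbove ∘ l.succAbove) :=
    (Fin.strictMono_succAbove i).comp (Fin.strictMono_succAbove l)
  have m2 : StrictMono (k.succAbove ∘ l'.succAbove) :=
    (Fin.strictMono_succAbove k).comp (Fin.strictMono_succAbove l')
  letI : WellFoundedLT (Fin n) := inferInstance
  refine (StrictMono.range_inj m1 m2).1 ?_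
  rw [range_double i k l h, range_double k i l' h']
  rw [Set.pair_comm]

lemma update_comp_cycleRange_inv {n : ℕ} (Z : Fin (n+1) → α) (l : Fin (n+1)) (c : α) :
    (update Z l c) ∘ ⇑(l.cycleRange)⁻¹ = Fin.cons c (Z ∘ l.succAbove) := by
  funext k
  refine Fin.cases ?_ (fun j => ?_) k
  · show update Z l c (l.cycleRange⁻¹ 0) = c
    rw [Equiv.Perm.inv_def, Fin.cycleRange_symm_zero, Function.update_self]
  · show update Z l c (l.cycleRange⁻¹ j.succ) = _
    rw [Equiv.Perm.inv_def, Fin.cycleRange_symm_succ, Fin.cons_succ,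
      Function.update_of_ne (Fin.succAbove_ne l j)]
    rfl

lemma snoc_comp_castSucc_succAbove {n : ℕ} (X : Fin (n+1) → α) (z : α) (i : Fin (n+1)) :
    (Fin.snoc X z : Fin (n+2) → α) ∘ (i.castSucc).succAbove = Fin.snoc (X ∘ i.succAbove) z := by
  funext j
  refine Fin.lastCases ?_ (fun j => ?_) j
  · have : (i.castSucc).succAbove (Fin.last n) = Fin.last (n+1) := by
      rw [Fin.succAbove_of_le_castSucc]
      · exact Fin.succ_last n
      · have := i.is_lt
        simp only [Fin.le_def, Fin.coe_castSucc, Fin.val_last]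
        omega
    simp [Function.comp, this]
  · have : (i.castSucc).succAbove j.castSucc = (i.succAbove j).castSucc := by
      rcases lt_or_ge j.castSucc i with hlt | hle
      · rw [Fin.succAbove_of_castSucc_lt _ _ (by simpa [Fin.lt_def] using hlt),
          Fin.succAbove_of_castSucc_lt _ _ hlt]
      · rw [Fin.succAbove_of_le_castSucc _ _ (by simpa [Fin.le_def] using hle),
          Fin.succAbove_of_le_castSucc _ _ hle]
        simp [Fin.ext_iff]
    simp [Function.comp, this]

lemma snoc_comp_last_succAbove {n : ℕ} (X : Fin (n+1) → α) (z : α) :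
    (Fin.snoc X z : Fin (n+2) → α) ∘ (Fin.last (n+1)).succAbove = X := by
  rw [Fin.succAbove_last]
  funext j
  simp [Function.comp]


lemma swap_comp_succAbove_adj {n : ℕ} (a : Fin n) :
    ⇑(Equiv.swap a.castSucc a.succ) ∘ (a.castSucc).succAbove = (a.succ).succAbove := by
  funext j
  simp only [Function.comp_apply]
  rcases lt_trichotomy (j : ℕ) (a : ℕ) with hlt | heq | hgt
  · rw [Fin.succAbove_of_castSucc_lt _ _
        (by simp only [Fin.lt_def, Fin.le_def, Fin.ext_iff, ne_eq, Fin.coe_castSucc, Fin.val_succ]; omega),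
      Fin.succAbove_of_castSucc_lt _ _
        (by simp only [Fin.lt_def, Fin.le_def, Fin.ext_iff, ne_eq, Fin.coe_castSucc, Fin.val_succ]; omega)]
    exact Equiv.swap_apply_of_ne_of_ne
      (by simp only [Fin.lt_def, Fin.le_def, Fin.ext_iff, ne_eq, Fin.coe_castSucc, Fin.val_succ]; omega)
      (by simp only [Fin.lt_def, Fin.le_def, Fin.ext_iff, ne_eq, Fin.coe_castSucc, Fin.val_succ]; omega)
  · rw [Fin.succAbove_of_le_castSucc _ _
        (by simp only [Fin.lt_def, Fin.le_def, Fin.ext_iff, ne_eq, Fin.coe_castSucc, Fin.val_succ]; omega),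
      Fin.succAbove_of_castSucc_lt _ _
        (by simp only [Fin.lt_def, Fin.le_def, Fin.ext_iff, ne_eq, Fin.coe_castSucc, Fin.val_succ]; omega)]
    have hj : j.succ = a.succ := by simp only [Fin.lt_def, Fin.le_def, Fin.ext_iff, ne_eq, Fin.coe_castSucc, Fin.val_succ]; omega
    rw [hj, Equiv.swap_apply_right]
    simp only [Fin.lt_def, Fin.le_def, Fin.ext_iff, ne_eq, Fin.coe_castSucc, Fin.val_succ]; omega
  · rw [Fin.succAbove_of_le_castSucc _ _
        (by simp only [Fin.lt_def, Fin.le_def, Fin.ext_iff, ne_eq, Fin.coe_castSucc, Fin.val_succ]; omega),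
      Fin.succAbove_of_le_castSucc _ _
        (by simp only [Fin.lt_def, Fin.le_def, Fin.ext_iff, ne_eq, Fin.coe_castSucc, Fin.val_succ]; omega)]
    exact Equiv.swap_apply_of_ne_of_ne
      (by simp only [Fin.lt_def, Fin.le_def, Fin.ext_iff, ne_eq, Fin.coe_castSucc, Fin.val_succ]; omega)
      (by simp only [Fin.lt_def, Fin.le_def, Fin.ext_iff, ne_eq, Fin.coe_castSucc, Fin.val_succ]; omega)

lemma swap_comp_succAbove_adj' {n : ℕ} (a : Fin n) :
    ⇑(Equiv.swap a.castSucc a.succ) ∘ (a.succ).succAbove = (a.castSucc).succAbove := by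
  have h := swap_comp_succAbove_adj a
  calc ⇑(Equiv.swap a.castSucc a.succ) ∘ (a.succ).succAbove
      = ⇑(Equiv.swap a.castSucc a.succ) ∘ (⇑(Equiv.swap a.castSucc a.succ)
          ∘ (a.castSucc).succAbove) := by rw [h]
    _ = (a.castSucc).succAbove := by
        funext j; simp [Equiv.swap_apply_self]

lemma swap_comp_succAbove {n : ℕ} (i a b : Fin (n+1)) (ha : a ≠ i) (hb : b ≠ i) (hab : a ≠ b) :
    ∃ j1 j2 : Fin n, j1 ≠ j2 ∧
      ⇑(Equiv.swap a b) ∘ i.succAbove = i.succAbove ∘ ⇑(Equiv.swap j1 j2) := by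
  obtain ⟨j1, h1⟩ := Fin.exists_succAbove_eq ha
  obtain ⟨j2, h2⟩ := Fin.exists_succAbove_eq hb
  refine ⟨j1, j2, fun hc => hab (by rw [← h1, ← h2, hc]), ?_⟩
  funext k
  simp only [Function.comp_apply]
  rcases eq_or_ne k j1 with rfl | hk1
  · rw [h1, Equiv.swap_apply_left, Equiv.swap_apply_left, h2]
  rcases eq_or_ne k j2 with rfl | hk2
  · rw [h2, Equiv.swap_apply_right, Equiv.swap_apply_right, h1]
  · rw [Equiv.swap_apply_of_ne_of_ne hk1 hk2,
      Equiv.swap_apply_of_ne_of_ne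
        (fun hc => hk1 (Fin.succAbove_right_injective (by rw [hc, h1])))
        (fun hc => hk2 (Fin.succAbove_right_injective (by rw [hc, h2])))]

/-- the index of `k` in the list with `j` removed -/
def predOf {n : ℕ} (j k : Fin (n+2)) : Fin (n+1) :=
  ⟨if (k : ℕ) < (j : ℕ) then (k : ℕ) else (k : ℕ) - 1, by
    have hk := k.is_lt; have hj := j.is_lt; split_ifs <;> omega⟩

lemma predOf_succAbove {n : ℕ} (j : Fin (n+2)) (l : Fin (n+1)) :
    predOf j (j.succAbove l) = l := by
  rcases lt_or_ge l.castSucc j with hlt | hle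
  · rw [Fin.succAbove_of_castSucc_lt _ _ hlt]
    have : (l : ℕ) < (j : ℕ) := by simpa [Fin.lt_def] using hlt
    simp [predOf, Fin.ext_iff, this]
  · rw [Fin.succAbove_of_le_castSucc _ _ hle]
    have : (j : ℕ) ≤ (l : ℕ) := by simpa [Fin.le_def] using hle
    simp [predOf, Fin.ext_iff]
    omega

lemma succAbove_predOf {n : ℕ} {j k : Fin (n+2)} (h : k ≠ j) :
    j.succAbove (predOf j k) = k := by
  obtain ⟨l, hl⟩ := Fin.exists_succAbove_eq h
  rw [← hl, predOf_succAbove]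

lemma val_predOf_lt {n : ℕ} {j k : Fin (n+2)} (h : (k : ℕ) < (j : ℕ)) :
    ((predOf j k : Fin (n+1)) : ℕ) = (k : ℕ) := by simp [predOf, h]

lemma val_predOf_gt {n : ℕ} {j k : Fin (n+2)} (h : (j : ℕ) < (k : ℕ)) :
    ((predOf j k : Fin (n+1)) : ℕ) = (k : ℕ) - 1 := by
  simp [predOf]; omega

section Signs
variable {K : Type*} [Field K]

lemma neg_one_pow_sub (n q : ℕ) (h : q ≤ n) : (-1 : K) ^ (n - q) = (-1) ^ (n + q) := by
  rw [show n + q = (n - q) + 2 * q by omega, pow_add, pow_mul, neg_one_sq, one_pow, mul_one]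

lemma neg_one_pow_eq_of_even_add {p q : ℕ} (h : Even (p + q)) : (-1 : K) ^ p = (-1) ^ q := by
  rcases Nat.even_add.1 h with h'
  rcases Nat.even_or_odd p with hp | hp
  · rw [Even.neg_one_pow hp, Even.neg_one_pow (h'.1 hp)]
  · rw [Odd.neg_one_pow hp, Odd.neg_one_pow]
    rcases Nat.even_or_odd q with hq | hq
    · exact absurd (h'.2 hq) (Nat.not_even_iff_odd.2 hp)
    · exact hq

lemma neg_one_pow_eq_neg_of_odd_add {p q : ℕ} (h : Odd (p + q)) : (-1 : K) ^ p = -(-1) ^ q := by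
  obtain ⟨c, hc⟩ := h
  have h2 : Even (p + (q + 1)) := ⟨c + 1, by omega⟩
  rw [neg_one_pow_eq_of_even_add h2, pow_succ, mul_neg_one]

end Signs

section Sums
variable {M : Type*} [AddCommMonoid M]

/-- the set of distinct pairs -/
def Dpairs (n : ℕ) : Finset (Fin n × Fin n) :=
  Finset.univ.filter (fun p => p.1 ≠ p.2)

lemma mem_Dpairs {n : ℕ} (p : Fin n × Fin n) : p ∈ Dpairs n ↔ p.1 ≠ p.2 := by
  simp [Dpairs]

lemma sum_succAbove_pairs {n : ℕ} (u : Fin (n+1) → Fin (n+1) → M) :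
    ∑ j : Fin (n+1), ∑ l : Fin n, u j (j.succAbove l)
      = ∑ p ∈ Dpairs (n+1), u p.1 p.2 := by
  rw [← Finset.sum_product' Finset.univ Finset.univ (fun j l => u j (j.succAbove l))]
  refine Finset.sum_bij (fun (a : Fin (n+1) × Fin n) _ => (a.1, a.1.succAbove a.2)) ?_ ?_ ?_ ?_
  · intro a _
    rw [mem_Dpairs]
    exact fun hc => Fin.succAbove_ne a.1 a.2 hc.symm
  · intro a _ b _ h
    simp only [Prod.mk.injEq] at h
    obtain ⟨h1, h2⟩ := h
    rw [← h1] at h2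
    exact Prod.ext h1 (Fin.succAbove_right_injective h2)
  · intro b hb
    rw [mem_Dpairs] at hb
    obtain ⟨l, hl⟩ := Fin.exists_succAbove_eq (Ne.symm hb)
    exact ⟨(b.1, l), Finset.mem_product.2 ⟨Finset.mem_univ _, Finset.mem_univ _⟩,
      by simp [hl]⟩
  · intro a _; rfl

lemma sum_pairs_swap {n : ℕ} (u : Fin n → Fin n → M) :
    ∑ p ∈ Dpairs n, u p.1 p.2 = ∑ p ∈ Dpairs n, u p.2 p.1 := by
  refine Finset.sum_nbij' Prod.swap Prod.swap ?_ ?_ ?_ ?_ ?_ <;>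
    simp +contextual [mem_Dpairs, Dpairs, ne_comm]

lemma sum_pairs_cancel {M : Type*} [AddCommGroup M] {n : ℕ} (u : Fin n → Fin n → M)
    (h : ∀ a b : Fin n, a ≠ b → u a b + u b a = 0) :
    ∑ p ∈ Dpairs n, u p.1 p.2 = 0 := by
  refine Finset.sum_involution (fun p _ => p.swap) ?_ ?_ ?_ ?_
  · intro p hp
    exact h p.1 p.2 ((mem_Dpairs p).1 hp)
  · intro p hp _
    intro hc
    have h2 : p.2 = p.1 := by
      have := congrArg Prod.fst hc
      simpa using this
    exact ((mem_Dpairs p).1 hp) h2.symm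
  · intro p hp
    rw [mem_Dpairs] at hp ⊢
    simpa using Ne.symm hp
  · intro p _
    rfl

end Sums

section Ext
variable {K : Type*} [Field K] {A : Type*} {M : Type*} [AddCommGroup M] [Module K M]

/-- skewness of the sign-extension of a skew map -/
lemma ext_skew {n : ℕ} (φ : A → K) (g : (Fin n → A) → M) (hg : SkewOn g) :
    SkewOn (fun x : Fin (n+1) → A =>
      ∑ i : Fin (n+1), ((-1 : K) ^ (i : ℕ) * φ (x i)) • g (x ∘ i.succAbove)) := by
  set F : (Fin (n+1) → A) → M := fun x =>
    ∑ i : Fin (n+1), ((-1 : K) ^ (i : ℕ) * φ (x i)) • g (x ∘ i.succAbove) with hF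
  -- adjacent swaps
  have adj : ∀ (x : Fin (n+1) → A) (a : Fin n),
      F (x ∘ ⇑(Equiv.swap a.castSucc a.succ)) = - F x := by
    intro x a
    have key : ∀ i : Fin (n+1),
        ((-1 : K) ^ (i : ℕ) * φ ((x ∘ ⇑(Equiv.swap a.castSucc a.succ)) i)) •
          g ((x ∘ ⇑(Equiv.swap a.castSucc a.succ)) ∘ i.succAbove)
        = - ((((-1 : K) ^ (((Equiv.swap a.castSucc a.succ) i : Fin (n+1)) : ℕ)) *
            φ (x ((Equiv.swap a.castSucc a.succ) i))) •
          g (x ∘ ((Equiv.swap a.castSucc a.succ) i).succAbove)) := by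
      intro i
      have hcomp : (x ∘ ⇑(Equiv.swap a.castSucc a.succ)) ∘ i.succAbove
          = x ∘ (⇑(Equiv.swap a.castSucc a.succ) ∘ i.succAbove) := rfl
      rcases eq_or_ne i a.castSucc with rfl | hi1
      · have hsgn : (-1 : K) ^ ((a.castSucc : Fin (n+1)) : ℕ)
            = - (-1 : K) ^ ((a.succ : Fin (n+1)) : ℕ) := by
          apply neg_one_pow_eq_neg_of_odd_add
          simp only [Fin.coe_castSucc, Fin.val_succ]
          exact ⟨(a : ℕ), by omega⟩
        rw [hcomp, swap_comp_succAbove_adj a]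
        simp only [Function.comp_apply, Equiv.swap_apply_left]
        rw [hsgn, neg_mul, neg_smul]
      rcases eq_or_ne i a.succ with rfl | hi2
      · have hsgn : (-1 : K) ^ ((a.succ : Fin (n+1)) : ℕ)
            = - (-1 : K) ^ ((a.castSucc : Fin (n+1)) : ℕ) := by
          apply neg_one_pow_eq_neg_of_odd_add
          simp only [Fin.coe_castSucc, Fin.val_succ]
          exact ⟨(a : ℕ), by omega⟩
        rw [hcomp, swap_comp_succAbove_adj' a]
        simp only [Function.comp_apply, Equiv.swap_apply_right]
        rw [hsgn, neg_mul, neg_smul]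
      · obtain ⟨j1, j2, hj, hc⟩ := swap_comp_succAbove i a.castSucc a.succ hi1.symm hi2.symm
          (by simp only [ne_eq, Fin.ext_iff, Fin.coe_castSucc, Fin.val_succ]; omega)
        have e1 : (x ∘ ⇑(Equiv.swap a.castSucc a.succ)) ∘ i.succAbove
            = (x ∘ i.succAbove) ∘ ⇑(Equiv.swap j1 j2) := by rw [hcomp, hc]; rfl
        have e2 : g ((x ∘ i.succAbove) ∘ ⇑(Equiv.swap j1 j2)) = - g (x ∘ i.succAbove) := by
          have h3 := hg (x ∘ i.succAbove) (Equiv.swap j1 j2)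
          rw [Equiv.Perm.sign_swap hj] at h3
          simpa using h3
        simp only [Function.comp_apply]
        rw [Equiv.swap_apply_of_ne_of_ne hi1 hi2, e1, e2, smul_neg]
    calc F (x ∘ ⇑(Equiv.swap a.castSucc a.succ))
        = ∑ i : Fin (n+1), - ((((-1 : K) ^ (((Equiv.swap a.castSucc a.succ) i : Fin (n+1)) : ℕ)) *
            φ (x ((Equiv.swap a.castSucc a.succ) i))) •
          g (x ∘ ((Equiv.swap a.castSucc a.succ) i).succAbove)) := by
          rw [hF]; exact Finset.sum_congr rfl (fun i _ => key i)
      _ = - F x := by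
          rw [Finset.sum_neg_distrib]
          congr 1
          exact Equiv.sum_comp (Equiv.swap a.castSucc a.succ)
            (fun i => ((-1 : K) ^ (i : ℕ) * φ (x i)) • g (x ∘ i.succAbove))
  -- consecutive swaps
  have adj2 : ∀ (a b : Fin (n+1)), (a : ℕ) + 1 = (b : ℕ) →
      ∀ x : Fin (n+1) → A, F (x ∘ ⇑(Equiv.swap a b)) = - F x := by
    intro a b hab x
    have ha : (a : ℕ) < n := by have := b.is_lt; omega
    have h1 : a = (⟨(a : ℕ), ha⟩ : Fin n).castSucc := by simp [Fin.ext_iff]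
    have h2 : b = (⟨(a : ℕ), ha⟩ : Fin n).succ := by simp [Fin.ext_iff]; omega
    rw [h1, h2]
    exact adj x _
  -- arbitrary swaps, by induction on the gap
  have gap : ∀ (d : ℕ) (a b : Fin (n+1)), (a : ℕ) + d + 1 = (b : ℕ) →
      ∀ x : Fin (n+1) → A, F (x ∘ ⇑(Equiv.swap a b)) = - F x := by
    intro d
    induction d with
    | zero =>
      intro a b hab x
      exact adj2 a b (by omega) x
    | succ d ih =>
      intro a b hab x
      have hc : (a : ℕ) + d + 1 < n + 1 := by have := b.is_lt; omega
      set c : Fin (n+1) := ⟨(a : ℕ) + d + 1, hc⟩ with hcdef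
      have hac : (a : ℕ) + d + 1 = (c : ℕ) := rfl
      have hca : c ≠ a := by simp [hcdef, Fin.ext_iff]; omega
      have hswap : Equiv.swap a b = Equiv.swap c b * Equiv.swap a c * Equiv.swap c b := by
        have h4 := Equiv.swap_apply_apply (Equiv.swap c b) a c
        rw [Equiv.swap_apply_of_ne_of_ne (Ne.symm hca) (fun h => by
            rw [h] at hab; omega : a ≠ b), Equiv.swap_apply_left] at h4
        rw [Equiv.swap_inv] at h4
        exact h4
      rw [hswap]
      have h5 : x ∘ ⇑(Equiv.swap c b * Equiv.swap a c * Equiv.swap c b)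
          = (((x ∘ ⇑(Equiv.swap c b)) ∘ ⇑(Equiv.swap a c)) ∘ ⇑(Equiv.swap c b)) := rfl
      rw [h5, adj2 c b (by simp [hcdef]; omega), ih a c hac, adj2 c b (by simp [hcdef]; omega),
        neg_neg]
  -- all swaps
  have swaps : ∀ (a b : Fin (n+1)), a ≠ b →
      ∀ x : Fin (n+1) → A, F (x ∘ ⇑(Equiv.swap a b)) = - F x := by
    intro a b hab x
    rcases lt_or_gt_of_ne (fun h : (a : ℕ) = (b : ℕ) => hab (Fin.ext h)) with h | h
    · exact gap ((b : ℕ) - (a : ℕ) - 1) a b (by omega) x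
    · rw [Equiv.swap_comm]
      exact gap ((a : ℕ) - (b : ℕ) - 1) b a (by omega) x
  -- conclude by induction over the permutation
  intro x σ
  have main : ∀ σ : Equiv.Perm (Fin (n+1)), ∀ x : Fin (n+1) → A,
      F (x ∘ ⇑σ) = ((Equiv.Perm.sign σ : ℤ)) • F x := by
    intro σ
    refine Equiv.Perm.swap_induction_on σ (by intro x; simp) ?_
    intro τ a b hab ihτ x
    have hco : x ∘ ⇑(Equiv.swap a b * τ) = (x ∘ ⇑(Equiv.swap a b)) ∘ ⇑τ := rfl
    rw [hco, ihτ, swaps a b hab x, Equiv.Perm.sign_mul, Equiv.Perm.sign_swap hab]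
    simp [smul_smul]
  exact main σ x

end Ext
section RepLemmas
variable {K : Type*} [Field K] {g V : Type*} [AddCommGroup g] [Module K g]
  [AddCommGroup V] [Module K V]

/-- one-slot linear map of a multilinear map -/
def slotLin {M : Type*} [AddCommGroup M] [Module K M] {k : ℕ}
    (G : (Fin k → g) → M) (hG : MultiLinearOn K G) (x : Fin k → g) (i : Fin k) :
    g →ₗ[K] M where
  toFun v := G (Function.update x i v)
  map_add' := hG.1 x i
  map_smul' := hG.2 x i

/-- last-slot linear map along a `snoc` -/
def lastLin {M : Type*} [AddCommGroup M] [Module K M] {k : ℕ}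
    (G : (Fin (k+1) → g) → M) (hG : MultiLinearOn K G) (w : Fin k → g) :
    g →ₗ[K] M where
  toFun v := G (Fin.snoc w v)
  map_add' a b := by
    have h := hG.1 (Fin.snoc w a) (Fin.last k) a b
    simpa [Fin.update_snoc_last] using h
  map_smul' c a := by
    have h := hG.2 (Fin.snoc w a) (Fin.last k) c a
    simpa [Fin.update_snoc_last] using h

lemma update_eq_sign_cons {M : Type*} [AddCommGroup M] [Module K M] {k : ℕ}
    (G : (Fin (k+1) → g) → M) (hG : SkewOn G) (Z : Fin (k+1) → g) (l : Fin (k+1)) (c : g) :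
    G (Function.update Z l c) = ((-1 : K) ^ (l : ℕ)) • G (Fin.cons c (Z ∘ l.succAbove)) := by
  have h := hG (Function.update Z l c) (l.cycleRange)⁻¹
  rw [update_comp_cycleRange_inv] at h
  have hs : ((Equiv.Perm.sign (l.cycleRange)⁻¹ : ℤˣ) : ℤ) = (-1 : ℤ) ^ (l : ℕ) := by
    rw [map_inv, Fin.sign_cycleRange]
    simp
  have key : ((-1 : K) ^ (l : ℕ)) • G (Fin.cons c (Z ∘ l.succAbove))
      = G (Function.update Z l c) := by
    rw [h, hs, ← Int.cast_smul_eq_zsmul K, smul_smul]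
    push_cast
    rw [← pow_add, Even.neg_one_pow ⟨(l : ℕ), rfl⟩, one_smul]
  exact key.symm

lemma ext_multilinear {M : Type*} [AddCommGroup M] [Module K M] {n : ℕ} (f : g →ₗ[K] K)
    (G : (Fin n → g) → M) (hG : MultiLinearOn K G) :
    MultiLinearOn K (fun x : Fin (n+1) → g =>
      ∑ i : Fin (n+1), ((-1 : K) ^ (i : ℕ) * f (x i)) • G (x ∘ i.succAbove)) := by
  constructor
  · intro x j a b
    rw [← Finset.sum_add_distrib]
    refine Finset.sum_congr rfl (fun i _ => ?_)
    rcases eq_or_ne i j with rfl | hij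
    · rw [update_comp_succAbove_self, update_comp_succAbove_self, update_comp_succAbove_self]
      simp only [Function.update_self]
      rw [map_add, mul_add, add_smul]
    · obtain ⟨l, hl⟩ := Fin.exists_succAbove_eq (Ne.symm hij)
      rw [update_comp_succAbove x i j l hl, update_comp_succAbove x i j l hl,
        update_comp_succAbove x i j l hl]
      simp only [Function.update_of_ne hij]
      rw [hG.1 (x ∘ i.succAbove) l a b, smul_add]
  · intro x j c a
    rw [Finset.smul_sum]
    refine Finset.sum_congr rfl (fun i _ => ?_)
    rcases eq_or_ne i j with rfl | hij
    · rw [update_comp_succAbove_self, update_comp_succAbove_self]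
      simp only [Function.update_self]
      rw [map_smul, smul_eq_mul, mul_left_comm, smul_smul]
    · obtain ⟨l, hl⟩ := Fin.exists_succAbove_eq (Ne.symm hij)
      rw [update_comp_succAbove x i j l hl, update_comp_succAbove x i j l hl]
      simp only [Function.update_of_ne hij]
      rw [hG.2 (x ∘ i.succAbove) l c a, smul_comm]

lemma fRho_eq {m : ℕ} (ρ : (Fin (m+1) → g) → Module.End K V) (f : g →ₗ[K] K)
    (x : Fin (m+1+1) → g) :
    fRho K ρ f x = ∑ i : Fin (m+2),
      ((-1 : K) ^ (i : ℕ) * f (x i)) • ρ (x ∘ i.succAbove) := by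
  unfold fRho
  refine Finset.sum_congr rfl (fun i _ => ?_)
  rw [← Int.cast_smul_eq_zsmul K, smul_smul]
  push_cast
  rfl

lemma fBr_eq {m : ℕ} (br : (Fin (m+2) → g) → g) (f : g →ₗ[K] K) (x : Fin (m+1+2) → g) :
    fBr K br f x = ∑ i : Fin (m+3),
      ((-1 : K) ^ (i : ℕ) * f (x i)) • br (x ∘ i.succAbove) := by
  unfold fBr
  refine Finset.sum_congr rfl (fun i _ => ?_)
  rw [← Int.cast_smul_eq_zsmul K, smul_smul]
  push_cast
  rfl

lemma f_fBr {m : ℕ} (br : (Fin (m+2) → g) → g) (f : g →ₗ[K] K)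
    (hf : ∀ y : Fin (m+2) → g, f (br y) = 0) (z : Fin (m+1+2) → g) :
    f (fBr K br f z) = 0 := by
  rw [fBr_eq, map_sum]
  refine Finset.sum_eq_zero (fun i _ => ?_)
  rw [map_smul, hf, smul_zero]

lemma fBr_snoc {m : ℕ} (br : (Fin (m+2) → g) → g) (f : g →ₗ[K] K)
    (X : Fin (m+2) → g) (z : g) :
    fBr K br f (Fin.snoc X z)
      = (∑ i : Fin (m+2), ((-1 : K) ^ (i : ℕ) * f (X i)) • br (Fin.snoc (X ∘ i.succAbove) z))
        + ((-1 : K) ^ (m+2) * f z) • br X := by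
  rw [fBr_eq, Fin.sum_univ_castSucc]
  congr 1
  · refine Finset.sum_congr rfl (fun i _ => ?_)
    rw [snoc_comp_castSucc_succAbove]
    simp only [Fin.snoc_castSucc, Fin.coe_castSucc]
  · rw [snoc_comp_last_succAbove]
    simp only [Fin.snoc_last, Fin.val_last]

lemma sum_pairs_sign_cancel {M : Type*} [AddCommGroup M] [Module K M] {n : ℕ}
    (φ : Fin (n+2) → K) (C : K) (R : (Fin n → Fin (n+2)) → M) :
    ∑ p ∈ Dpairs (n+2),
      ((((-1 : K) ^ ((p.1 : Fin (n+2)) : ℕ) * φ p.1) * (C * φ p.2)) *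
        (-1 : K) ^ (((predOf p.1 p.2) : Fin (n+1)) : ℕ)) •
        R (p.1.succAbove ∘ (predOf p.1 p.2).succAbove) = 0 := by
  refine sum_pairs_cancel
    (fun a b => ((((-1 : K) ^ ((a : Fin (n+2)) : ℕ) * φ a) * (C * φ b)) *
        (-1 : K) ^ (((predOf a b) : Fin (n+1)) : ℕ)) •
        R (a.succAbove ∘ (predOf a b).succAbove)) ?_
  intro a b hab
  have hminor : a.succAbove ∘ (predOf a b).succAbove = b.succAbove ∘ (predOf b a).succAbove :=
    succAbove_succAbove_comm a b _ _ (succAbove_predOf (Ne.symm hab)) (succAbove_predOf hab)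
  rw [hminor, ← add_smul]
  have hodd : Odd (((a : ℕ) + ((predOf a b : Fin (n+1)) : ℕ))
      + ((b : ℕ) + ((predOf b a : Fin (n+1)) : ℕ))) := by
    rcases lt_or_gt_of_ne (fun h : (a : ℕ) = (b : ℕ) => hab (Fin.ext h)) with h | h
    · rw [val_predOf_gt h, val_predOf_lt h]
      exact ⟨(a : ℕ) + (b : ℕ) - 1, by omega⟩
    · rw [val_predOf_lt h, val_predOf_gt h]
      exact ⟨(a : ℕ) + (b : ℕ) - 1, by omega⟩
  have hpq := neg_one_pow_eq_neg_of_odd_add (K := K) hodd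
  have h1 : (((-1 : K) ^ ((a : Fin (n+2)) : ℕ) * φ a) * (C * φ b)) *
        (-1 : K) ^ (((predOf a b) : Fin (n+1)) : ℕ)
      = ((-1 : K) ^ ((a : ℕ) + ((predOf a b : Fin (n+1)) : ℕ))) * (φ a * (C * φ b)) := by
    rw [pow_add]; ring
  have h2 : (((-1 : K) ^ ((b : Fin (n+2)) : ℕ) * φ b) * (C * φ a)) *
        (-1 : K) ^ (((predOf b a) : Fin (n+1)) : ℕ)
      = ((-1 : K) ^ ((b : ℕ) + ((predOf b a : Fin (n+1)) : ℕ))) * (φ a * (C * φ b)) := by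
    rw [pow_add]; ring
  rw [h1, h2, hpq, neg_mul, neg_add_cancel, zero_smul]

end RepLemmas

end Helpers



/-- Let `(g, ρ)` be an `n`-LieRep pair (`n = m+2`) and `f ∈ g*` vanish on all
brackets.  Then `ϱ(x₁,...,xₙ) = Σᵢ (-1)^{i-1} f(xᵢ) ρ(x₁,...,x̂ᵢ,...,xₙ)` is a representation
of the `(n+1)`-Lie algebra `g_f` on `V`. -/
theorem f_rho_is_rep {K : Type*} [Field K] {g V : Type*}
    [AddCommGroup g] [Module K g] [AddCommGroup V] [Module K V] {m : ℕ}
    (br : (Fin (m + 2) → g) → g) (ρ : (Fin (m + 1) → g) → Module.End K V)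
    (hg : IsNLie K br) (hρ : IsRep K br ρ)
    (f : g →ₗ[K] K) (hf : ∀ y : Fin (m + 2) → g, f (br y) = 0) :
    IsRep K (fBr K br f) (fRho K ρ f) := by
  obtain ⟨hml, hsk, hcomm, hrep2⟩ := hρ
  have he : fRho K ρ f = fun x : Fin (m+1+1) → g =>
      ∑ i : Fin (m+2), ((-1 : K) ^ (i : ℕ) * f (x i)) • ρ (x ∘ i.succAbove) :=
    funext (fRho_eq ρ f)
  refine ⟨?_, ?_, ?_, ?_⟩
  · rw [he]; exact ext_multilinear f ρ hml
  · rw [he]; exact ext_skew (⇑f) ρ hsk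
  · -- the commutator identity
    intro X Y
    have prod_exp : ∀ (c d : Fin (m+2) → K) (P Q : Fin (m+2) → Module.End K V),
        (∑ i : Fin (m+2), c i • P i) * (∑ j : Fin (m+2), d j • Q j)
          = ∑ i : Fin (m+2), ∑ j : Fin (m+2), (c i * d j) • (P i * Q j) := by
      intro c d P Q
      rw [Finset.sum_mul]
      refine Finset.sum_congr rfl (fun i _ => ?_)
      rw [Finset.mul_sum]
      refine Finset.sum_congr rfl (fun j _ => ?_)
      rw [smul_mul_assoc, mul_smul_comm, smul_smul]
    have comm_exp : ∀ (c d : Fin (m+2) → K) (P Q : Fin (m+2) → Module.End K V),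
        (∑ i : Fin (m+2), c i • P i) * (∑ j : Fin (m+2), d j • Q j)
            - (∑ j : Fin (m+2), d j • Q j) * (∑ i : Fin (m+2), c i • P i)
          = ∑ i : Fin (m+2), ∑ j : Fin (m+2), (c i * d j) • (P i * Q j - Q j * P i) := by
      intro c d P Q
      rw [prod_exp, prod_exp]
      have hsw : ∑ j : Fin (m+2), ∑ i : Fin (m+2), (d j * c i) • (Q j * P i)
          = ∑ i : Fin (m+2), ∑ j : Fin (m+2), (c i * d j) • (Q j * P i) := by
        rw [Finset.sum_comm]
        exact Finset.sum_congr rfl (fun i _ => Finset.sum_congr rfl (fun j _ => by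
          rw [mul_comm (d j) (c i)]))
      rw [hsw, ← Finset.sum_sub_distrib]
      refine Finset.sum_congr rfl (fun i _ => ?_)
      rw [← Finset.sum_sub_distrib]
      refine Finset.sum_congr rfl (fun j _ => ?_)
      rw [← smul_sub]
    have hL : fRho K ρ f X * fRho K ρ f Y - fRho K ρ f Y * fRho K ρ f X
        = ∑ i : Fin (m+2), ∑ j : Fin (m+2), ∑ l : Fin (m+1),
            (((-1:K)^(i:ℕ) * f (X i)) * ((-1:K)^(j:ℕ) * f (Y j))) •
              ρ (Function.update (Y ∘ j.succAbove) l
                (br (Fin.snoc (X ∘ i.succAbove) ((Y ∘ j.succAbove) l)))) := by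
      rw [fRho_eq ρ f X, fRho_eq ρ f Y, comm_exp]
      refine Finset.sum_congr rfl (fun i _ => Finset.sum_congr rfl (fun j _ => ?_))
      rw [hcomm (X ∘ i.succAbove) (Y ∘ j.succAbove), Finset.smul_sum]
    have hRk : ∀ k : Fin (m+2),
        fRho K ρ f (Function.update Y k (fBr K br f (Fin.snoc X (Y k))))
          = ∑ l : Fin (m+1),
              ((-1:K)^((k.succAbove l : Fin (m+2)) : ℕ) * f (Y (k.succAbove l))) •
                ρ ((Function.update Y k (fBr K br f (Fin.snoc X (Y k))))
                    ∘ (k.succAbove l).succAbove) := by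
      intro k
      rw [fRho_eq, Fin.sum_univ_succAbove
        (fun i : Fin (m+2) => ((-1:K)^(i:ℕ) *
          f ((Function.update Y k (fBr K br f (Fin.snoc X (Y k)))) i)) •
          ρ ((Function.update Y k (fBr K br f (Fin.snoc X (Y k)))) ∘ i.succAbove)) k]
      rw [Function.update_self, f_fBr br f hf, mul_zero, zero_smul, zero_add]
      refine Finset.sum_congr rfl (fun l _ => ?_)
      rw [Function.update_of_ne (Fin.succAbove_ne k l)]
    have hR1 : ∑ k : Fin (m+2),
        fRho K ρ f (Function.update Y k (fBr K br f (Fin.snoc X (Y k))))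
          = ∑ p ∈ Dpairs (m+2),
              ((-1:K)^((p.2 : Fin (m+2)) : ℕ) * f (Y p.2)) •
                ρ ((Function.update Y p.1 (fBr K br f (Fin.snoc X (Y p.1)))) ∘ p.2.succAbove) := by
      rw [Finset.sum_congr rfl (fun k _ => hRk k)]
      exact sum_succAbove_pairs (fun k j => ((-1:K)^((j : Fin (m+2)) : ℕ) * f (Y j)) •
        ρ ((Function.update Y k (fBr K br f (Fin.snoc X (Y k)))) ∘ j.succAbove))
    have hR2 : ∑ p ∈ Dpairs (m+2),
        ((-1:K)^((p.2 : Fin (m+2)) : ℕ) * f (Y p.2)) •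
            ρ ((Function.update Y p.1 (fBr K br f (Fin.snoc X (Y p.1)))) ∘ p.2.succAbove)
          = ∑ j : Fin (m+2), ∑ l : Fin (m+1),
              ((-1:K)^((j : Fin (m+2)) : ℕ) * f (Y j)) •
                ρ ((Function.update Y (j.succAbove l)
                    (fBr K br f (Fin.snoc X (Y (j.succAbove l))))) ∘ j.succAbove) := by
      rw [sum_pairs_swap (fun a b => ((-1:K)^((b : Fin (m+2)) : ℕ) * f (Y b)) •
        ρ ((Function.update Y a (fBr K br f (Fin.snoc X (Y a)))) ∘ b.succAbove))]
      exact (sum_succAbove_pairs (fun j k => ((-1:K)^((j : Fin (m+2)) : ℕ) * f (Y j)) •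
        ρ ((Function.update Y k (fBr K br f (Fin.snoc X (Y k)))) ∘ j.succAbove))).symm
    have hstep : ∀ (j : Fin (m+2)) (l : Fin (m+1)),
        ((-1:K)^((j : Fin (m+2)) : ℕ) * f (Y j)) •
            ρ ((Function.update Y (j.succAbove l)
                (fBr K br f (Fin.snoc X (Y (j.succAbove l))))) ∘ j.succAbove)
          = (∑ i : Fin (m+2),
              (((-1:K)^(j:ℕ) * f (Y j)) * ((-1:K)^(i:ℕ) * f (X i))) •
                ρ (Function.update (Y ∘ j.succAbove) l
                  (br (Fin.snoc (X ∘ i.succAbove) (Y (j.succAbove l))))))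
            + (((-1:K)^(j:ℕ) * f (Y j)) * ((-1:K)^(m+2) * f (Y (j.succAbove l)))) •
                ρ (Function.update (Y ∘ j.succAbove) l (br X)) := by
      intro j l
      rw [update_comp_succAbove Y j (j.succAbove l) l rfl]
      have hslot : ∀ v : g, ρ (Function.update (Y ∘ j.succAbove) l v)
          = slotLin ρ hml (Y ∘ j.succAbove) l v := fun _ => rfl
      rw [hslot, fBr_snoc br f X (Y (j.succAbove l)), map_add, map_sum]
      simp only [map_smul]
      rw [smul_add, Finset.smul_sum]
      congr 1
      · refine Finset.sum_congr rfl (fun i _ => ?_)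
        rw [smul_smul]
        rfl
      · rw [smul_smul]
        rfl
    rw [hL, hR1, hR2,
      Finset.sum_congr rfl (fun j _ => Finset.sum_congr rfl (fun l _ => hstep j l))]
    have hsplit : ∑ j : Fin (m+2), ∑ l : Fin (m+1),
        ((∑ i : Fin (m+2),
              (((-1:K)^(j:ℕ) * f (Y j)) * ((-1:K)^(i:ℕ) * f (X i))) •
                ρ (Function.update (Y ∘ j.succAbove) l
                  (br (Fin.snoc (X ∘ i.succAbove) (Y (j.succAbove l))))))
            + (((-1:K)^(j:ℕ) * f (Y j)) * ((-1:K)^(m+2) * f (Y (j.succAbove l)))) •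
                ρ (Function.update (Y ∘ j.succAbove) l (br X)))
        = (∑ j : Fin (m+2), ∑ l : Fin (m+1), ∑ i : Fin (m+2),
              (((-1:K)^(j:ℕ) * f (Y j)) * ((-1:K)^(i:ℕ) * f (X i))) •
                ρ (Function.update (Y ∘ j.succAbove) l
                  (br (Fin.snoc (X ∘ i.succAbove) (Y (j.succAbove l))))))
          + ∑ j : Fin (m+2), ∑ l : Fin (m+1),
              (((-1:K)^(j:ℕ) * f (Y j)) * ((-1:K)^(m+2) * f (Y (j.succAbove l)))) •
                ρ (Function.update (Y ∘ j.succAbove) l (br X)) := by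
      rw [← Finset.sum_add_distrib]
      exact Finset.sum_congr rfl (fun j _ => by rw [← Finset.sum_add_distrib])
    rw [hsplit]
    have hE : ∑ j : Fin (m+2), ∑ l : Fin (m+1),
        (((-1:K)^(j:ℕ) * f (Y j)) * ((-1:K)^(m+2) * f (Y (j.succAbove l)))) •
            ρ (Function.update (Y ∘ j.succAbove) l (br X)) = 0 := by
      have he2 : ∀ (j : Fin (m+2)) (l : Fin (m+1)),
          (((-1:K)^(j:ℕ) * f (Y j)) * ((-1:K)^(m+2) * f (Y (j.succAbove l)))) •
              ρ (Function.update (Y ∘ j.succAbove) l (br X))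
            = ((((-1:K)^(j:ℕ) * f (Y j)) * ((-1:K)^(m+2) * f (Y (j.succAbove l)))) *
                (-1:K)^(((predOf j (j.succAbove l)) : Fin (m+1)) : ℕ)) •
                ρ (Fin.cons (br X) (Y ∘ (j.succAbove ∘ (predOf j (j.succAbove l)).succAbove))) := by
        intro j l
        rw [predOf_succAbove j l]
        rw [update_eq_sign_cons (K := K) ρ hsk (Y ∘ j.succAbove) l (br X), smul_smul]
        rfl
      rw [Finset.sum_congr rfl (fun j _ => Finset.sum_congr rfl (fun l _ => he2 j l))]
      rw [sum_succAbove_pairs (fun j k =>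
        ((((-1:K)^((j : Fin (m+2)):ℕ) * f (Y j)) * ((-1:K)^(m+2) * f (Y k))) *
            (-1:K)^(((predOf j k) : Fin (m+1)) : ℕ)) •
            ρ (Fin.cons (br X) (Y ∘ (j.succAbove ∘ (predOf j k).succAbove))))]
      exact sum_pairs_sign_cancel (fun t => f (Y t)) ((-1:K)^(m+2))
        (fun e => ρ (Fin.cons (br X) (Y ∘ e)))
    rw [hE, add_zero]
    rw [Finset.sum_comm]
    refine Finset.sum_congr rfl (fun j _ => ?_)
    rw [Finset.sum_comm]
    refine Finset.sum_congr rfl (fun l _ => Finset.sum_congr rfl (fun i _ => ?_))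
    rw [mul_comm (((-1:K)^(j:ℕ) * f (Y j))) (((-1:K)^(i:ℕ) * f (X i)))]
    rfl
  · -- the second representation axiom
    intro x y
    have hB0 : f (fBr K br f y) = 0 := f_fBr br f hf y
    set Φ : Fin (m+3) → Fin (m+3) → Module.End K V := fun a b =>
      ∑ j : Fin (m+1), ((((-1:K)^(j:ℕ) * f (x j)) * ((-1:K)^(a:ℕ) * f (y a))) *
          (-1:K)^((m+1) + ((predOf a b : Fin (m+2)) : ℕ))) •
        (ρ (y ∘ (a.succAbove ∘ (predOf a b).succAbove)) *
          ρ (Fin.snoc (x ∘ j.succAbove) (y b))) with hPhi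
    set Ψ : Fin (m+3) → Fin (m+3) → Module.End K V := fun a b =>
      ∑ j : Fin (m+1), ((-1:K)^((m+1+1) + (a:ℕ)) *
          (((-1:K)^((predOf a b : Fin (m+2)) : ℕ) * f (y b)) * ((-1:K)^(j:ℕ) * f (x j)))) •
        (ρ (y ∘ (a.succAbove ∘ (predOf a b).succAbove)) *
          ρ (Fin.snoc (x ∘ j.succAbove) (y a))) with hPsi
    set Θ : Fin (m+3) → Fin (m+3) → Module.End K V := fun a b =>
      ((((-1:K)^(a:ℕ) * f (y a)) * ((-1:K) * f (y b))) *
          (-1:K)^((predOf a b : Fin (m+2)) : ℕ)) •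
        (ρ (y ∘ (a.succAbove ∘ (predOf a b).succAbove)) * ρ x) with hTheta
    have prod_exp2 : ∀ {n1 n2 : ℕ} (a : Fin n1 → K) (A : Fin n1 → Module.End K V)
        (b : Fin n2 → K) (B : Fin n2 → Module.End K V),
        (∑ i1 : Fin n1, a i1 • A i1) * (∑ j1 : Fin n2, b j1 • B j1)
          = ∑ i1 : Fin n1, ∑ j1 : Fin n2, (a i1 * b j1) • (A i1 * B j1) := by
      intro n1 n2 a A b B
      rw [Finset.sum_mul]
      refine Finset.sum_congr rfl (fun i1 _ => ?_)
      rw [Finset.mul_sum]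
      refine Finset.sum_congr rfl (fun j1 _ => ?_)
      rw [smul_mul_assoc, mul_smul_comm, smul_smul]
    have prod_smul : ∀ {n1 : ℕ} (a : Fin n1 → K) (A : Fin n1 → Module.End K V)
        (c : K) (C : Module.End K V),
        (∑ i1 : Fin n1, a i1 • A i1) * (c • C) = ∑ i1 : Fin n1, (a i1 * c) • (A i1 * C) := by
      intro n1 a A c C
      rw [Finset.sum_mul]
      refine Finset.sum_congr rfl (fun i1 _ => ?_)
      rw [smul_mul_assoc, mul_smul_comm, smul_smul]
    -- expand the left-hand side
    have step1 : fRho K ρ f (Fin.snoc x (fBr K br f y))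
        = ∑ j : Fin (m+1), ((-1:K)^(j:ℕ) * f (x j)) •
            ρ (Fin.snoc (x ∘ j.succAbove) (fBr K br f y)) := by
      rw [fRho_eq, Fin.sum_univ_castSucc]
      have hlast0 : ((-1:K)^((Fin.last (m+1) : Fin (m+2)) : ℕ) *
            f ((Fin.snoc x (fBr K br f y) : Fin (m+2) → g) (Fin.last (m+1)))) •
            ρ ((Fin.snoc x (fBr K br f y) : Fin (m+2) → g) ∘ (Fin.last (m+1)).succAbove) = 0 := by
        rw [Fin.snoc_last, hB0, mul_zero, zero_smul]
      rw [hlast0, add_zero]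
      refine Finset.sum_congr rfl (fun j _ => ?_)
      rw [snoc_comp_castSucc_succAbove, Fin.snoc_castSucc, Fin.coe_castSucc]
    have step2 : ∀ j : Fin (m+1), ρ (Fin.snoc (x ∘ j.succAbove) (fBr K br f y))
        = ∑ p : Fin (m+3), ((-1:K)^(p:ℕ) * f (y p)) •
            ρ (Fin.snoc (x ∘ j.succAbove) (br (y ∘ p.succAbove))) := by
      intro j
      have hlin : ∀ v : g, ρ (Fin.snoc (x ∘ j.succAbove) v)
          = lastLin ρ hml (x ∘ j.succAbove) v := fun _ => rfl
      rw [hlin, fBr_eq br f y, map_sum]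
      simp only [map_smul]
      exact Finset.sum_congr rfl (fun p _ => rfl)
    have step3 : ∀ (j : Fin (m+1)) (p : Fin (m+3)),
        ρ (Fin.snoc (x ∘ j.succAbove) (br (y ∘ p.succAbove)))
          = ∑ q : Fin (m+2), ((-1:K)^((m+1) + (q:ℕ))) •
              (ρ (fun j' => (y ∘ p.succAbove) (q.succAbove j')) *
                ρ (Fin.snoc (x ∘ j.succAbove) ((y ∘ p.succAbove) q))) := by
      intro j p
      rw [hrep2 (x ∘ j.succAbove) (y ∘ p.succAbove)]
      refine Finset.sum_congr rfl (fun q _ => ?_)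
      rw [← Int.cast_smul_eq_zsmul K]
      push_cast
      rw [neg_one_pow_sub (m+1) (q:ℕ) (Nat.lt_succ_iff.mp q.is_lt)]
    have hLHS : fRho K ρ f (Fin.snoc x (fBr K br f y))
        = ∑ p : Fin (m+3), ∑ q : Fin (m+2), Φ p (p.succAbove q) := by
      have hcan : ∀ (p : Fin (m+3)) (q : Fin (m+2)),
          (∑ j : Fin (m+1),
            ((((-1:K)^(j:ℕ) * f (x j)) * ((-1:K)^(p:ℕ) * f (y p))) * ((-1:K)^((m+1) + (q:ℕ)))) •
              (ρ (fun j' => (y ∘ p.succAbove) (q.succAbove j')) *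
                ρ (Fin.snoc (x ∘ j.succAbove) ((y ∘ p.succAbove) q))))
            = Φ p (p.succAbove q) := by
        intro p q
        rw [hPhi]
        dsimp only
        rw [predOf_succAbove p q]
        exact Finset.sum_congr rfl (fun j _ => rfl)
      calc fRho K ρ f (Fin.snoc x (fBr K br f y))
          = ∑ j : Fin (m+1), ((-1:K)^(j:ℕ) * f (x j)) •
              ρ (Fin.snoc (x ∘ j.succAbove) (fBr K br f y)) := step1
        _ = ∑ j : Fin (m+1), ∑ p : Fin (m+3),
              (((-1:K)^(j:ℕ) * f (x j)) * ((-1:K)^(p:ℕ) * f (y p))) •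
                ρ (Fin.snoc (x ∘ j.succAbove) (br (y ∘ p.succAbove))) := by
            refine Finset.sum_congr rfl (fun j _ => ?_)
            rw [step2 j, Finset.smul_sum]
            exact Finset.sum_congr rfl (fun p _ => by rw [smul_smul])
        _ = ∑ j : Fin (m+1), ∑ p : Fin (m+3), ∑ q : Fin (m+2),
              ((((-1:K)^(j:ℕ) * f (x j)) * ((-1:K)^(p:ℕ) * f (y p))) * ((-1:K)^((m+1) + (q:ℕ)))) •
                (ρ (fun j' => (y ∘ p.succAbove) (q.succAbove j')) *
                  ρ (Fin.snoc (x ∘ j.succAbove) ((y ∘ p.succAbove) q))) := by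
            refine Finset.sum_congr rfl (fun j _ => Finset.sum_congr rfl (fun p _ => ?_))
            rw [step3 j p, Finset.smul_sum]
            exact Finset.sum_congr rfl (fun q _ => by rw [smul_smul])
        _ = ∑ p : Fin (m+3), ∑ j : Fin (m+1), ∑ q : Fin (m+2),
              ((((-1:K)^(j:ℕ) * f (x j)) * ((-1:K)^(p:ℕ) * f (y p))) * ((-1:K)^((m+1) + (q:ℕ)))) •
                (ρ (fun j' => (y ∘ p.succAbove) (q.succAbove j')) *
                  ρ (Fin.snoc (x ∘ j.succAbove) ((y ∘ p.succAbove) q))) := Finset.sum_comm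
        _ = ∑ p : Fin (m+3), ∑ q : Fin (m+2), ∑ j : Fin (m+1),
              ((((-1:K)^(j:ℕ) * f (x j)) * ((-1:K)^(p:ℕ) * f (y p))) * ((-1:K)^((m+1) + (q:ℕ)))) •
                (ρ (fun j' => (y ∘ p.succAbove) (q.succAbove j')) *
                  ρ (Fin.snoc (x ∘ j.succAbove) ((y ∘ p.succAbove) q))) := by
            exact Finset.sum_congr rfl (fun p _ => Finset.sum_comm)
        _ = ∑ p : Fin (m+3), ∑ q : Fin (m+2), Φ p (p.succAbove q) := by
            exact Finset.sum_congr rfl (fun p _ => Finset.sum_congr rfl (fun q _ => hcan p q))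
    -- expand the right-hand side
    have step4 : ∀ i : Fin (m+3), fRho K ρ f (Fin.snoc x (y i))
        = (∑ j : Fin (m+1), ((-1:K)^(j:ℕ) * f (x j)) • ρ (Fin.snoc (x ∘ j.succAbove) (y i)))
          + ((-1:K)^(m+1) * f (y i)) • ρ x := by
      intro i
      rw [fRho_eq, Fin.sum_univ_castSucc]
      congr 1
      · refine Finset.sum_congr rfl (fun j _ => ?_)
        rw [snoc_comp_castSucc_succAbove, Fin.snoc_castSucc, Fin.coe_castSucc]
      · rw [Fin.snoc_last, snoc_comp_last_succAbove, Fin.val_last]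
    have step5 : ∀ i : Fin (m+3), fRho K ρ f (fun j' => y (i.succAbove j'))
        = ∑ p' : Fin (m+2), ((-1:K)^(p':ℕ) * f (y (i.succAbove p'))) •
            ρ ((fun j' => y (i.succAbove j')) ∘ p'.succAbove) :=
      fun i => fRho_eq ρ f (fun j' => y (i.succAbove j'))
    have hterm : ∀ i : Fin (m+3),
        ((-1:ℤ)^((m+1+1) - (i:ℕ))) •
            (fRho K ρ f (fun j' => y (i.succAbove j')) * fRho K ρ f (Fin.snoc x (y i)))
          = (∑ p' : Fin (m+2), Ψ i (i.succAbove p'))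
            + ∑ p' : Fin (m+2), Θ i (i.succAbove p') := by
      intro i
      rw [← Int.cast_smul_eq_zsmul K]
      push_cast
      rw [neg_one_pow_sub (m+1+1) (i:ℕ) (Nat.lt_succ_iff.mp i.is_lt)]
      rw [step5 i, step4 i, mul_add, prod_exp2, prod_smul, smul_add, Finset.smul_sum,
        Finset.smul_sum]
      congr 1
      · refine Finset.sum_congr rfl (fun p' _ => ?_)
        rw [Finset.smul_sum, hPsi]
        dsimp only
        rw [predOf_succAbove i p']
        refine Finset.sum_congr rfl (fun j _ => ?_)
        rw [smul_smul]
        rfl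
      · refine Finset.sum_congr rfl (fun p' _ => ?_)
        rw [smul_smul, hTheta]
        dsimp only
        rw [predOf_succAbove i p']
        have hcoefA : ((-1:K)^((m+1+1)+(i:ℕ)) * (-1:K)^(m+1)) = ((-1:K)^((i:ℕ)) * (-1:K)) := by
          rw [← pow_add]
          have h1 : ((-1:K)^((i:ℕ)) * (-1:K)) = (-1:K)^((i:ℕ)+1) := by rw [pow_succ]
          rw [h1]
          exact neg_one_pow_eq_of_even_add ⟨m + 2 + (i:ℕ), by omega⟩
        have hs : (-1:K)^((m+1+1)+(i:ℕ)) *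
              (((-1:K)^(p':ℕ) * f (y (i.succAbove p'))) * ((-1:K)^(m+1) * f (y i)))
            = (((-1:K)^((i:ℕ)) * f (y i)) * ((-1:K) * f (y (i.succAbove p')))) *
                (-1:K)^(p':ℕ) := by
          linear_combination (f (y (i.succAbove p')) * f (y i) * (-1:K)^(p':ℕ)) * hcoefA
        rw [hs]
        rfl
    have hA0 : ∑ i : Fin (m+3), ∑ p' : Fin (m+2), Θ i (i.succAbove p') = 0 := by
      rw [sum_succAbove_pairs Θ, hTheta]
      exact sum_pairs_sign_cancel (fun t => f (y t)) (-1:K) (fun e => ρ (y ∘ e) * ρ x)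
    have hPhiPsi : ∀ pr ∈ Dpairs (m+3), Φ pr.1 pr.2 = Ψ pr.2 pr.1 := by
      intro pr hpr
      have hab : pr.1 ≠ pr.2 := (mem_Dpairs pr).1 hpr
      obtain ⟨a, b⟩ := pr
      simp only at hab
      rw [hPhi, hPsi]
      dsimp only
      have hminor : a.succAbove ∘ (predOf a b).succAbove = b.succAbove ∘ (predOf b a).succAbove :=
        succAbove_succAbove_comm a b _ _ (succAbove_predOf (Ne.symm hab)) (succAbove_predOf hab)
      rw [hminor]
      refine Finset.sum_congr rfl (fun j _ => ?_)
      have hodd : Odd (((a : ℕ) + ((predOf a b : Fin (m+2)) : ℕ))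
          + ((b : ℕ) + ((predOf b a : Fin (m+2)) : ℕ))) := by
        rcases lt_or_gt_of_ne (fun h : (a : ℕ) = (b : ℕ) => hab (Fin.ext h)) with h | h
        · rw [val_predOf_gt h, val_predOf_lt h]
          exact ⟨(a : ℕ) + (b : ℕ) - 1, by omega⟩
        · rw [val_predOf_lt h, val_predOf_gt h]
          exact ⟨(a : ℕ) + (b : ℕ) - 1, by omega⟩
      have hpq := neg_one_pow_eq_neg_of_odd_add (K := K) hodd
      rw [pow_add, pow_add] at hpq
      have hs : (((-1:K)^(j:ℕ) * f (x j)) * ((-1:K)^(a:ℕ) * f (y a))) *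
            (-1:K)^((m+1) + ((predOf a b : Fin (m+2)) : ℕ))
          = (-1:K)^((m+1+1) + (b:ℕ)) *
              (((-1:K)^((predOf b a : Fin (m+2)) : ℕ) * f (y a)) * ((-1:K)^(j:ℕ) * f (x j))) := by
        rw [pow_add ((-1:K)) (m+1) (((predOf a b : Fin (m+2)) : ℕ)),
          pow_add ((-1:K)) (m+1+1) ((b:ℕ)),
          show ((-1:K)^(m+1+1)) = (-1:K)^(m+1) * (-1:K) from by rw [pow_succ]]
        linear_combination (f (x j) * f (y a) * (-1:K)^(j:ℕ) * (-1:K)^(m+1)) * hpq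
      rw [hs]
    calc fRho K ρ f (Fin.snoc x (fBr K br f y))
        = ∑ p : Fin (m+3), ∑ q : Fin (m+2), Φ p (p.succAbove q) := hLHS
      _ = ∑ pr ∈ Dpairs (m+3), Φ pr.1 pr.2 := sum_succAbove_pairs Φ
      _ = ∑ pr ∈ Dpairs (m+3), Ψ pr.2 pr.1 := Finset.sum_congr rfl hPhiPsi
      _ = ∑ pr ∈ Dpairs (m+3), Ψ pr.1 pr.2 := (sum_pairs_swap Ψ).symm
      _ = ∑ i : Fin (m+3), ∑ p' : Fin (m+2), Ψ i (i.succAbove p') :=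
          (sum_succAbove_pairs Ψ).symm
      _ = (∑ i : Fin (m+3), ∑ p' : Fin (m+2), Ψ i (i.succAbove p'))
            + ∑ i : Fin (m+3), ∑ p' : Fin (m+2), Θ i (i.succAbove p') := by
          rw [hA0, add_zero]
      _ = ∑ i : Fin (m+3), ((∑ p' : Fin (m+2), Ψ i (i.succAbove p'))
            + ∑ p' : Fin (m+2), Θ i (i.succAbove p')) := Finset.sum_add_distrib.symm
      _ = ∑ i : Fin (m+1+2), ((-1:ℤ)^((m+1+1) - (i:ℕ))) •
            (fRho K ρ f (fun j' => y (i.succAbove j')) * fRho K ρ f (Fin.snoc x (y i))) :=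
          Finset.sum_congr rfl (fun i _ => (hterm i).symm)
end

section
/- Let T: V → g be a relative Rota-Baxter operator on an n-LieRep pair (g,ρ), and let f ∈ g* vanish on all n-brackets. Then T is also a relative Rota-Baxter operator on the (n+1)-LieRep pair (g_f, ϱ), i.e., {Tu1,...,Tu_{n+1}} = Σ_{i=1}^{n+1}(−1)^{n+1−i} T(ϱ(Tu1,...,T̂ui,...,Tu_{n+1})(ui)). -/
lemma val_succAbove' {n : ℕ} (p : Fin (n+1)) (i : Fin n) :
    ((p.succAbove i : Fin (n+1)) : ℕ) = if (i:ℕ) < (p:ℕ) then (i:ℕ) else (i:ℕ) + 1 := by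
  rw [Fin.succAbove]
  split_ifs with h1 h2 h3 <;> simp_all [Fin.lt_def]

lemma val_predAbove' {n : ℕ} (p : Fin n) (i : Fin (n+1)) :
    ((p.predAbove i : Fin n) : ℕ) = if (p:ℕ) < (i:ℕ) then (i:ℕ) - 1 else (i:ℕ) := by
  rw [Fin.predAbove]
  have h : p.castSucc < i ↔ (p:ℕ) < (i:ℕ) := by
    rw [Fin.lt_def, Fin.coe_castSucc]
  by_cases hc : p.castSucc < i
  · rw [dif_pos hc, Fin.coe_pred, if_pos (h.1 hc)]
  · rw [dif_neg hc, Fin.coe_castPred, if_neg (fun hn => hc (h.2 hn))]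

lemma sa_pa {n : ℕ} (i : Fin (n+1)) (j : Fin n) :
    (i.succAbove j).succAbove (j.predAbove i) = i := by
  have hi := i.isLt; have hj := j.isLt
  apply Fin.ext
  simp only [val_succAbove', val_predAbove']
  split_ifs <;> omega

lemma pa_sa {n : ℕ} (i : Fin (n+1)) (j : Fin n) :
    (j.predAbove i).predAbove (i.succAbove j) = j := by
  have hi := i.isLt; have hj := j.isLt
  apply Fin.ext
  simp only [val_succAbove', val_predAbove']
  split_ifs <;> omega

lemma sa_sa {n : ℕ} (i : Fin (n+2)) (j : Fin (n+1)) (l : Fin n) :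
    i.succAbove (j.succAbove l) = (i.succAbove j).succAbove ((j.predAbove i).succAbove l) := by
  have hi := i.isLt; have hj := j.isLt; have hl := l.isLt
  apply Fin.ext
  simp only [val_succAbove', val_predAbove']
  split_ifs <;> omega

lemma neg_one_pow_congr' {a b : ℕ} (h : a % 2 = b % 2) : ((-1:ℤ))^a = (-1)^b := by
  rcases Nat.even_or_odd a with ha | ha
  · rw [Nat.even_iff] at ha
    rw [Even.neg_one_pow (Nat.even_iff.2 ha), Even.neg_one_pow (Nat.even_iff.2 (by omega))]
  · rw [Nat.odd_iff] at ha
    rw [Odd.neg_one_pow (Nat.odd_iff.2 ha), Odd.neg_one_pow (Nat.odd_iff.2 (by omega))]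

lemma sign_eq {m : ℕ} (i : Fin (m+3)) (j : Fin (m+2)) :
    ((-1:ℤ))^((i:ℕ) + (m+1 - (j:ℕ))) =
      (-1)^((m+2 - ((i.succAbove j : Fin (m+3)) : ℕ)) + ((j.predAbove i : Fin (m+2)) : ℕ)) := by
  have hi := i.isLt; have hj := j.isLt
  apply neg_one_pow_congr'
  simp only [val_succAbove', val_predAbove']
  split_ifs <;> omega

def pairSwap {n : ℕ} (p : Fin (n+1) × Fin n) : Fin (n+1) × Fin n :=
  (p.1.succAbove p.2, p.2.predAbove p.1)

lemma pairSwap_involutive {n : ℕ} : Function.Involutive (pairSwap (n := n)) := by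
  intro p
  refine Prod.ext ?_ ?_
  · exact sa_pa p.1 p.2
  · exact pa_sa p.1 p.2

/-- Let `T : V → g` be a relative Rota-Baxter operator on an `n`-LieRep pair
`(g, ρ)` (`n = m+2`), and `f ∈ g*` vanish on all `n`-brackets.  Then `T` is also a relative
Rota-Baxter operator on the `(n+1)`-LieRep pair `(g_f, ϱ)`. -/
theorem rbo_lifts_to_n_plus_one {K : Type*} [Field K] {g V : Type*}
    [AddCommGroup g] [Module K g] [AddCommGroup V] [Module K V] {m : ℕ}
    (br : (Fin (m + 2) → g) → g) (ρ : (Fin (m + 1) → g) → Module.End K V)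
    (T : V →ₗ[K] g) (hg : IsNLie K br) (hρ : IsRep K br ρ) (hT : IsRBO K br ρ T)
    (f : g →ₗ[K] K) (hf : ∀ y : Fin (m + 2) → g, f (br y) = 0) :
    IsRBO K (fBr K br f) (fRho K ρ f) T := by
  intro v
  have hL : fBr K br f (fun i => T (v i)) =
      ∑ i : Fin (m + 3), ∑ j : Fin (m + 2),
        ((-1 : ℤ) ^ ((i : ℕ) + (m + 1 - (j : ℕ)))) •
          (f (T (v i)) •
            T (ρ (fun l => T (v (i.succAbove (j.succAbove l)))) (v (i.succAbove j)))) := by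
    rw [fBr]
    refine Finset.sum_congr rfl fun i _ => ?_
    rw [hT (fun j => v (i.succAbove j))]
    rw [Finset.smul_sum, Finset.smul_sum]
    refine Finset.sum_congr rfl fun j _ => ?_
    rw [smul_comm (f (T (v i))), smul_smul, ← pow_add]
  have hR : (∑ i : Fin (m + 1 + 2), ((-1 : ℤ) ^ ((m + 1 + 1) - (i : ℕ))) •
        T ((fRho K ρ f) (fun j => T (v (i.succAbove j))) (v i))) =
      ∑ i : Fin (m + 3), ∑ k : Fin (m + 2),
        ((-1 : ℤ) ^ ((m + 2 - (i : ℕ)) + (k : ℕ))) •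
          (f (T (v (i.succAbove k))) •
            T (ρ (fun l => T (v (i.succAbove (k.succAbove l)))) (v i))) := by
    refine Finset.sum_congr rfl fun i _ => ?_
    rw [fRho]
    simp only [LinearMap.sum_apply, LinearMap.smul_apply, map_sum, map_zsmul, map_smul,
      Finset.smul_sum]
    refine Finset.sum_congr rfl fun k _ => ?_
    rw [smul_smul, ← pow_add]
  rw [hL, hR, ← Finset.sum_product', ← Finset.sum_product', Finset.univ_product_univ]
  refine Fintype.sum_bijective pairSwap pairSwap_involutive.bijective _ _ fun p => ?_
  obtain ⟨i, j⟩ := p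
  simp only [pairSwap, sa_pa, ← sa_sa, sign_eq]
end

section
/- Let T: V → g be a relative Rota-Baxter operator on an n-LieRep pair (g,ρ), and f ∈ g* vanish on all n-brackets. Then the induced (n+1)-Lie bracket on V satisfies ⟦u1,...,u_{n+1}⟧_T = Σ_{i=1}^{n+1} (−1)^{i−1} (f∘T)(ui) [u1,...,ûi,...,u_{n+1}]_T, and moreover (f∘T)([u1,...,un]_T) = 0 for all ui ∈ V; hence the (n+1)-Lie algebra (V,⟦-,...,-⟧_T) coincides with the (n+1)-Lie algebra constructed from (V,[-,...,-]_T) and the functional f∘T. -/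
lemma val_sa {n : ℕ} (i : Fin (n+1)) (k : Fin n) :
    ((i.succAbove k : Fin (n+1)) : ℕ) = if (k:ℕ) < (i:ℕ) then (k:ℕ) else (k:ℕ)+1 := by
  rcases lt_or_ge (Fin.castSucc k) i with h|h
  · rw [Fin.succAbove_of_castSucc_lt _ _ h]
    have : (k:ℕ) < (i:ℕ) := h
    simp [this]
  · rw [Fin.succAbove_of_le_castSucc _ _ h]
    have : ¬ ((k:ℕ) < (i:ℕ)) := by exact not_lt.mpr h
    simp [this]

def sIdx {n : ℕ} (i : Fin (n+2)) (k : Fin (n+1)) : Fin (n+1) :=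
  if h : (k:ℕ) < (i:ℕ) then ⟨(i:ℕ)-1, by omega⟩ else ⟨(i:ℕ), by have := k.isLt; omega⟩

lemma val_sIdx {n : ℕ} (i : Fin (n+2)) (k : Fin (n+1)) :
    ((sIdx i k : Fin (n+1)) : ℕ) = if (k:ℕ) < (i:ℕ) then (i:ℕ)-1 else (i:ℕ) := by
  unfold sIdx; split <;> rfl

lemma sa_sIdx {n : ℕ} (i : Fin (n+2)) (k : Fin (n+1)) :
    (i.succAbove k).succAbove (sIdx i k) = i := by
  have hi := i.isLt; have hk := k.isLt
  apply Fin.ext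
  simp only [val_sa, val_sIdx]
  split_ifs <;> omega

lemma sIdx_invol {n : ℕ} (i : Fin (n+2)) (k : Fin (n+1)) :
    sIdx (i.succAbove k) (sIdx i k) = k := by
  have hi := i.isLt; have hk := k.isLt
  apply Fin.ext
  simp only [val_sa, val_sIdx]
  split_ifs <;> omega

lemma comp_eq {n : ℕ} (i : Fin (n+2)) (k : Fin (n+1)) (j : Fin n) :
    (i.succAbove k).succAbove ((sIdx i k).succAbove j) = i.succAbove (k.succAbove j) := by
  have hi := i.isLt; have hk := k.isLt; have hj := j.isLt
  apply Fin.ext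
  simp only [val_sa, val_sIdx]
  split_ifs <;> omega

lemma exp_eq {n : ℕ} (i : Fin (n+2)) (k : Fin (n+1)) :
    ((n+1) - (i:ℕ)) + (k:ℕ) = ((i.succAbove k : Fin (n+2)) : ℕ) + ((n:ℕ) - ((sIdx i k : Fin (n+1)):ℕ)) := by
  have hi := i.isLt; have hk := k.isLt
  simp only [val_sa, val_sIdx]
  split_ifs <;> omega


/-- Let `T : V → g` be a relative Rota-Baxter operator on an `n`-LieRep pair
`(g, ρ)` (`n = m+2`), and `f ∈ g*` vanish on all `n`-brackets.  Then the induced `(n+1)`-Lie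
bracket on `V` satisfies
`⟦u₁,...,u_{n+1}⟧_T = Σᵢ (-1)^{i-1} (f∘T)(uᵢ) [u₁,...,ûᵢ,...,u_{n+1}]_T`, and moreover
`(f∘T)([u₁,...,uₙ]_T) = 0`; hence `(V, ⟦-,...,-⟧_T)` coincides with the `(n+1)`-Lie algebra
constructed from `(V, [-,...,-]_T)` and the functional `f∘T`. -/
theorem induced_bracket_coincides {K : Type*} [Field K] {g V : Type*}
    [AddCommGroup g] [Module K g] [AddCommGroup V] [Module K V] {m : ℕ}
    (br : (Fin (m + 2) → g) → g) (ρ : (Fin (m + 1) → g) → Module.End K V)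
    (T : V →ₗ[K] g) (hg : IsNLie K br) (hρ : IsRep K br ρ) (hT : IsRBO K br ρ T)
    (f : g →ₗ[K] K) (hf : ∀ y : Fin (m + 2) → g, f (br y) = 0) :
    (∀ v : Fin (m + 1 + 2) → V,
        rbBracket K (fRho K ρ f) T v = fBr K (rbBracket K ρ T) (f.comp T) v) ∧
    (∀ u : Fin (m + 2) → V, f (T (rbBracket K ρ T u)) = 0) := by
  constructor
  · intro v
    have hL : rbBracket K (fRho K ρ f) T v =
        ∑ p : Fin (m+1+2) × Fin (m+1+1),
          ((-1:ℤ)^(((m+1+1) - ((p.1:ℕ))) + (p.2:ℕ))) •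
            (f (T (v (p.1.succAbove p.2))) •
              ρ (fun j => T (v (p.1.succAbove (p.2.succAbove j)))) (v p.1)) := by
      rw [Fintype.sum_prod_type, rbBracket]
      refine Finset.sum_congr rfl (fun i _ => ?_)
      rw [fRho, LinearMap.sum_apply, Finset.smul_sum]
      refine Finset.sum_congr rfl (fun k _ => ?_)
      rw [LinearMap.smul_apply, LinearMap.smul_apply, smul_smul, ← pow_add]
    have hR : fBr K (rbBracket K ρ T) (f.comp T) v =
        ∑ p : Fin (m+1+2) × Fin (m+1+1),
          ((-1:ℤ)^(((p.1:ℕ)) + ((m+1) - (p.2:ℕ)))) •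
            (f (T (v p.1)) •
              ρ (fun j => T (v (p.1.succAbove (p.2.succAbove j)))) (v (p.1.succAbove p.2))) := by
      rw [Fintype.sum_prod_type, fBr]
      refine Finset.sum_congr rfl (fun i _ => ?_)
      rw [rbBracket, Finset.smul_sum, Finset.smul_sum]
      refine Finset.sum_congr rfl (fun k _ => ?_)
      rw [LinearMap.comp_apply, smul_comm (f (T (v i))), smul_smul, ← pow_add]
    rw [hL, hR]
    refine Fintype.sum_bijective (fun p : Fin (m+1+2) × Fin (m+1+1) =>
        (p.1.succAbove p.2, sIdx p.1 p.2)) ?_ _ _ (fun p => ?_)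
    · refine Function.bijective_iff_has_inverse.mpr
        ⟨fun p => (p.1.succAbove p.2, sIdx p.1 p.2), fun p => ?_, fun p => ?_⟩ <;>
      · exact Prod.ext (sa_sIdx p.1 p.2) (sIdx_invol p.1 p.2)
    · obtain ⟨i, k⟩ := p
      simp only [sa_sIdx, comp_eq]
      rw [← exp_eq]
  · intro u
    have h : T (rbBracket K ρ T u) = br (fun i => T (u i)) := by
      rw [hT u, rbBracket, map_sum]
      exact Finset.sum_congr rfl (fun i _ => map_zsmul T _ _)
    rw [h, hf]
end

section
/- An n-Lie algebra (g,[-,...,-]_g) admits a compatible n-pre-Lie algebra structure if and only if there exists an invertible relative Rota-Baxter operator T: V → g on some n-LieRep pair (g,ρ); in that case the compatible structure is {x1,...,xn}_g = T(ρ(x1,...,x_{n−1})(T^{-1}xn)). -/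
section Aux

lemma snoc_comp_finRotate {α : Type*} {k : ℕ} (a : α) (x : Fin k → α) :
    (Fin.snoc x a : Fin (k+1) → α) = (Fin.cons a x) ∘ (finRotate (k+1)) := by
  funext i
  rw [Fin.snoc_eq_cons_rotate]; rfl

lemma SkewOn.snoc_eq_cons {α h : Type*} [AddCommGroup h] {k : ℕ}
    {f : (Fin (k+1) → α) → h} (hf : SkewOn f) (a : α) (x : Fin k → α) :
    f (Fin.snoc x a) = ((-1:ℤ)^k) • f (Fin.cons a x) := by
  rw [snoc_comp_finRotate, hf (Fin.cons a x) (finRotate (k+1)), sign_finRotate]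
  push_cast
  rfl

lemma SkewOn.cons_eq_snoc {α h : Type*} [AddCommGroup h] {k : ℕ}
    {f : (Fin (k+1) → α) → h} (hf : SkewOn f) (a : α) (x : Fin k → α) :
    f (Fin.cons a x) = ((-1:ℤ)^k) • f (Fin.snoc x a) := by
  rw [hf.snoc_eq_cons a x, smul_smul, ← pow_add, Even.neg_one_pow ⟨k, rfl⟩, one_smul]

variable {K : Type*} [Field K] {g V : Type*} [AddCommGroup g] [Module K g]
  [AddCommGroup V] [Module K V] {m : ℕ} {br : (Fin (m + 2) → g) → g}
  {ρ : (Fin (m + 1) → g) → Module.End K V}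

/-- `fil` pointwise in `cons` form, from the `snoc` form. -/
lemma fil_apply (hskew : SkewOn ρ)
    (hfil : ∀ (x : Fin m → g) (y : Fin (m + 2) → g),
      ρ (Fin.snoc x (br y)) =
        ∑ i : Fin (m + 2), ((-1 : ℤ) ^ ((m + 1) - (i : ℕ))) •
          (ρ (fun j => y (i.succAbove j)) * ρ (Fin.snoc x (y i))))
    (x : Fin m → g) (y : Fin (m + 2) → g) (v : V) :
    ρ (Fin.cons (br y) x) v =
      ∑ i : Fin (m + 2), ((-1 : ℤ) ^ ((m + 1) - (i : ℕ))) •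
        ρ (fun j => y (i.succAbove j)) (ρ (Fin.cons (y i) x) v) := by
  have h1 := hskew.cons_eq_snoc (br y) x
  rw [h1, LinearMap.smul_apply, hfil x y]
  simp only [LinearMap.coe_sum, Finset.sum_apply, LinearMap.smul_apply,
    Module.End.mul_apply, Finset.smul_sum, smul_smul]
  refine Finset.sum_congr rfl (fun i _ => ?_)
  rw [hskew.cons_eq_snoc (y i) x, LinearMap.smul_apply, map_zsmul, smul_smul, mul_comm]

/-- `fil` in `snoc` form, from the pointwise `cons` form. -/
lemma fil_of_apply (hskew : SkewOn ρ)
    (h : ∀ (x : Fin m → g) (y : Fin (m + 2) → g) (v : V),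
      ρ (Fin.cons (br y) x) v =
        ∑ i : Fin (m + 2), ((-1 : ℤ) ^ ((m + 1) - (i : ℕ))) •
          ρ (fun j => y (i.succAbove j)) (ρ (Fin.cons (y i) x) v))
    (x : Fin m → g) (y : Fin (m + 2) → g) :
    ρ (Fin.snoc x (br y)) =
      ∑ i : Fin (m + 2), ((-1 : ℤ) ^ ((m + 1) - (i : ℕ))) •
        (ρ (fun j => y (i.succAbove j)) * ρ (Fin.snoc x (y i))) := by
  ext v
  rw [hskew.snoc_eq_cons (br y) x, LinearMap.smul_apply, h x y v]
  simp only [LinearMap.coe_sum, Finset.sum_apply, LinearMap.smul_apply,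
    Module.End.mul_apply, Finset.smul_sum, smul_smul]
  refine Finset.sum_congr rfl (fun i _ => ?_)
  rw [hskew.snoc_eq_cons (y i) x, LinearMap.smul_apply, map_zsmul, smul_smul, mul_comm]

/-- The compatible bracket identity, from an invertible relative RBO. -/
lemma preC_of_rbo {T : V ≃ₗ[K] g} (hT : IsRBO K br ρ (T : V →ₗ[K] g))
    (y : Fin (m + 2) → g) :
    preC K (fun (x : Fin (m + 1) → g) (z : g) => T (ρ x (T.symm z))) y = br y := by
  have h := hT (fun i => T.symm (y i))
  simp only [LinearEquiv.coe_coe, LinearEquiv.apply_symm_apply] at h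
  rw [preC, ← h]

/-- The `n`-pre-Lie structure from an invertible relative RBO. -/
lemma isNPreLie_of_rbo {T : V ≃ₗ[K] g} (hrep : IsRep K br ρ)
    (hT : IsRBO K br ρ (T : V →ₗ[K] g)) :
    IsNPreLie K (fun (x : Fin (m + 1) → g) (z : g) => T (ρ x (T.symm z))) := by
  obtain ⟨⟨hadd, hsmul⟩, hskew, hcomm, hfil⟩ := hrep
  refine ⟨fun z => ⟨?_, ?_⟩, ?_, ?_, fun z => ?_, ?_, ?_⟩
  · intro x i a b
    simp only [hadd x i a b, LinearMap.add_apply, map_add]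
  · intro x i c a
    simp only [hsmul x i c a, LinearMap.smul_apply, map_smul]
  · intro x a b
    simp only [map_add]
  · intro x c a
    simp only [map_smul]
  · intro x σ
    simp only [hskew x σ, LinearMap.smul_apply, map_zsmul]
  · intro x y z
    simp only [preC_of_rbo hT, LinearEquiv.symm_apply_apply]
    have h := congrArg (fun φ : Module.End K V => T (φ (T.symm z))) (hcomm x y)
    simp only [LinearMap.sub_apply, Module.End.mul_apply, map_sub, LinearMap.coe_sum,
      Finset.sum_apply, map_sum] at h
    exact sub_eq_iff_eq_add.mp h
  · intro x w y
    simp only [preC_of_rbo hT, LinearEquiv.symm_apply_apply]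
    rw [fil_apply hskew hfil x y (T.symm w)]
    simp only [map_sum, map_zsmul]

end Aux


section Dir1

variable {K : Type*} [Field K] {g : Type*} [AddCommGroup g] [Module K g] {m : ℕ}
  {br : (Fin (m + 2) → g) → g} {p : (Fin (m + 1) → g) → g → g}

/-- Bundle an `n`-pre-Lie product as an `End`-valued map. -/
def preRho (hp : IsNPreLie K p) : (Fin (m + 1) → g) → Module.End K g := fun x =>
  { toFun := p x
    map_add' := hp.2.1 x
    map_smul' := hp.2.2.1 x }

lemma preRho_apply (hp : IsNPreLie K p) (x : Fin (m + 1) → g) (a : g) :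
    preRho hp x a = p x a := rfl

lemma skewOn_preRho (hp : IsNPreLie K p) : SkewOn (preRho hp) := by
  intro x σ
  ext z
  simp only [LinearMap.smul_apply, preRho_apply]
  exact hp.2.2.2.1 z x σ

lemma isRep_preRho (hp : IsNPreLie K p) (hpc : ∀ y : Fin (m + 2) → g, preC K p y = br y) :
    IsRep K br (preRho hp) := by
  refine ⟨⟨?_, ?_⟩, skewOn_preRho hp, ?_, ?_⟩
  · intro x i a b
    ext z
    simp only [LinearMap.add_apply, preRho_apply]
    exact (hp.1 z).1 x i a b
  · intro x i c a
    ext z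
    simp only [LinearMap.smul_apply, preRho_apply]
    exact (hp.1 z).2 x i c a
  · intro X Y
    ext z
    simp only [LinearMap.sub_apply, Module.End.mul_apply, LinearMap.coe_sum,
      Finset.sum_apply, preRho_apply]
    have h := hp.2.2.2.2.1 X Y z
    simp only [hpc] at h
    exact sub_eq_iff_eq_add.mpr h
  · refine fil_of_apply (skewOn_preRho hp) ?_
    intro x y v
    have h := hp.2.2.2.2.2 x v y
    simp only [hpc] at h
    simpa only [preRho_apply] using h

lemma isRBO_refl (hp : IsNPreLie K p) (hpc : ∀ y : Fin (m + 2) → g, preC K p y = br y) :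
    IsRBO K br (preRho hp) ((LinearEquiv.refl K g : g ≃ₗ[K] g) : g →ₗ[K] g) := by
  intro v
  simp only [LinearEquiv.coe_coe, LinearEquiv.refl_apply, preRho_apply]
  simpa [preC] using (hpc v).symm

end Dir1

universe u v

/-- An `n`-LieRep pair structure on the `n`-Lie algebra `(g, br)` together with an invertible
relative Rota-Baxter operator `T : V → g`. -/
structure InvertibleRBO (K : Type v) [Field K] (g : Type u) [AddCommGroup g] [Module K g]
    (m : ℕ) (br : (Fin (m + 2) → g) → g) where
  V : Type u
  [instAdd : AddCommGroup V]
  [instMod : Module K V]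
  ρ : (Fin (m + 1) → g) → Module.End K V
  T : V ≃ₗ[K] g
  rep : IsRep K br ρ
  rbo : IsRBO K br ρ (T : V →ₗ[K] g)

attribute [instance] InvertibleRBO.instAdd InvertibleRBO.instMod

/-- An `n`-Lie algebra `(g, br)` (`n = m+2`) admits a compatible `n`-pre-Lie
algebra structure if and only if there exists an invertible relative Rota-Baxter operator
`T : V → g` on some `n`-LieRep pair `(g, ρ)`; in that case the compatible structure is
`{x₁,...,xₙ}_g = T(ρ(x₁,...,x_{n-1})(T⁻¹ xₙ))`. -/
theorem compatible_pre_lie_iff_invertible_rbo {K : Type v} [Field K] [CharZero K]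
    {g : Type u} [AddCommGroup g] [Module K g] {m : ℕ}
    (br : (Fin (m + 2) → g) → g) (hg : IsNLie K br) :
    ((∃ p : (Fin (m + 1) → g) → g → g,
        IsNPreLie K p ∧ ∀ y : Fin (m + 2) → g, preC K p y = br y) ↔
      Nonempty (InvertibleRBO K g m br)) ∧
    (∀ P : InvertibleRBO K g m br,
        IsNPreLie K (fun (x : Fin (m + 1) → g) (z : g) => P.T (P.ρ x (P.T.symm z))) ∧
        ∀ y : Fin (m + 2) → g,
          preC K (fun (x : Fin (m + 1) → g) (z : g) => P.T (P.ρ x (P.T.symm z))) y = br y) := by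
  constructor
  · constructor
    · rintro ⟨p, hp, hpc⟩
      exact ⟨{ V := g, ρ := preRho hp, T := LinearEquiv.refl K g,
               rep := isRep_preRho hp hpc, rbo := isRBO_refl hp hpc }⟩
    · rintro ⟨P⟩
      exact ⟨fun x z => P.T (P.ρ x (P.T.symm z)), isNPreLie_of_rbo P.rep P.rbo,
        preC_of_rbo P.rbo⟩
  · intro P
    exact ⟨isNPreLie_of_rbo P.rep P.rbo, preC_of_rbo P.rbo⟩
end
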